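/- Advantage dominance of max⁺-aggregation: for every 0 ≤ t < H and every s ∈ S, the max⁺-aggregation policy π⊕ satisfies A^{f⁺}_t(s, π⊕) = max_{a∈A} A^{f⁺}_t(s, a) ≥ A^{f⁺}_t(s, π°) ≥ 0, where π° is the max⁺-following policy. -/

import Mathlib

open scoped BigOperators

/-- Expectation of a real-valued function under a probability mass function on a finite type. -/
noncomputable def pexp {α : Type*} [Fintype α] (p : PMF α) (f : α → ℝ) : ℝ :=
  ∑ a, (p a).toReal * f a

/-!
The greedy action `a*` maximises `a ↦ A^{f⁺}_t(s, a)`, so playing it deterministically attains the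
maximum, and any mixture of actions, in particular `π°`, does no better. For nonnegativity, let `k`
attain `f⁺_t(s) = V^{π^k}_t(s)`. Since `V^{π^k}_{t+1} ≤ f⁺_{t+1}`, the Bellman equation of `π^k`
gives `f⁺_t(s) ≤ E_{a∼π^k_t(s)}[r(s,a) + E_{s'}[f⁺_{t+1}(s')]]`, i.e. `A^{f⁺}_t(s, π°) ≥ 0`.
-/

section pexp

variable {α : Type*} [Fintype α] (p : PMF α)

theorem PMF.sum_toReal_eq_one : ∑ a, (p a).toReal = 1 := by
  have h := p.tsum_coe
  rw [tsum_fintype] at h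
  rw [← ENNReal.toReal_sum fun a _ => p.apply_ne_top a, h, ENNReal.toReal_one]

theorem pexp_const (c : ℝ) : pexp p (fun _ => c) = c := by
  rw [pexp, ← Finset.sum_mul, p.sum_toReal_eq_one, one_mul]

theorem pexp_sub_const (f : α → ℝ) (c : ℝ) : pexp p (fun a => f a - c) = pexp p f - c := by
  simp only [pexp, mul_sub, Finset.sum_sub_distrib]
  rw [← Finset.sum_mul, p.sum_toReal_eq_one, one_mul]

theorem pexp_mono {f g : α → ℝ} (h : f ≤ g) : pexp p f ≤ pexp p g :=
  Finset.sum_le_sum fun a _ => mul_le_mul_of_nonneg_left (h a) ENNReal.toReal_nonneg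

theorem pexp_le_iSup [Nonempty α] (f : α → ℝ) : pexp p f ≤ ⨆ a, f a :=
  calc pexp p f ≤ pexp p (fun _ => ⨆ a, f a) :=
        pexp_mono p fun a => le_ciSup (Finite.bddAbove_range f) a
    _ = ⨆ a, f a := pexp_const p _

theorem pexp_pure (a₀ : α) (f : α → ℝ) : pexp (PMF.pure a₀) f = f a₀ := by
  classical
  rw [pexp, Finset.sum_eq_single a₀ (fun b _ hb => by simp [PMF.pure_apply, hb]) (by simp)]
  simp

theorem pexp_pure_eq_iSup_of_forall_le [Nonempty α] {f : α → ℝ} {a₀ : α}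
    (h : ∀ a, f a ≤ f a₀) : pexp (PMF.pure a₀) f = ⨆ a, f a := by
  rw [pexp_pure]
  exact le_antisymm (le_ciSup (Finite.bddAbove_range f) a₀) (ciSup_le h)

end pexp

section advantage

variable {S A : Type*} [Fintype S] (P : S → A → PMF S) (r : S → A → ℝ)

noncomputable def advantage (f : ℕ → S → ℝ) (t : ℕ) (s : S) (a : A) : ℝ :=
  r s a + pexp (P s a) (f (t + 1)) - f t s

theorem pexp_advantage_nonneg [Fintype A] {f : ℕ → S → ℝ} {t : ℕ} {s : S} (π : PMF A) {V : S → ℝ}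
    (hV : V ≤ f (t + 1)) (hf : f t s ≤ pexp π fun a => r s a + pexp (P s a) V) :
    0 ≤ pexp π (advantage P r f t s) := by
  have hQ : pexp π (fun a => r s a + pexp (P s a) V) ≤
      pexp π (fun a => r s a + pexp (P s a) (f (t + 1))) :=
    pexp_mono π fun a => add_le_add_right (pexp_mono (P s a) hV) _
  unfold advantage
  rw [pexp_sub_const]
  linarith

end advantage

theorem maxplus_aggregation_advantage_dominance_general
    {S A : Type*} [Fintype S] [Fintype A] [Nonempty A]
    (P : S → A → PMF S) (r : S → A → ℝ)
    (H : ℕ)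
    (K : ℕ)
    (πs : Fin K → ℕ → S → PMF A)
    (Vs : Fin K → ℕ → S → ℝ)
    (hVs : ∀ k t, t < H → ∀ s,
      Vs k t s = pexp (πs k t s) (fun a => r s a + pexp (P s a) (Vs k (t + 1))))
    (fplus : ℕ → S → ℝ)
    (hfplus : ∀ t s, fplus t s = ⨆ k : Fin K, Vs k t s)
    (kstar : ℕ → S → Fin K)
    (hkstar : ∀ t s, Vs (kstar t s) t s = fplus t s)
    (astar : ℕ → S → A)
    (hastar : ∀ t s a,
      r s a + pexp (P s a) (fplus (t + 1)) - fplus t s ≤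
        r s (astar t s) + pexp (P s (astar t s)) (fplus (t + 1)) - fplus t s) :
    ∀ t, t < H → ∀ s,
      (pexp (PMF.pure (astar t s))
          (fun a => r s a + pexp (P s a) (fplus (t + 1)) - fplus t s) =
        ⨆ a : A, (r s a + pexp (P s a) (fplus (t + 1)) - fplus t s)) ∧
      (pexp (πs (kstar t s) t s)
          (fun a => r s a + pexp (P s a) (fplus (t + 1)) - fplus t s) ≤
        ⨆ a : A, (r s a + pexp (P s a) (fplus (t + 1)) - fplus t s)) ∧
      (0 ≤ pexp (πs (kstar t s) t s)
          (fun a => r s a + pexp (P s a) (fplus (t + 1)) - fplus t s)) := by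
  intro t ht s
  have hVs_le_fplus : ∀ k, Vs k (t + 1) ≤ fplus (t + 1) := fun k s' => by
    rw [hfplus]
    exact le_ciSup (Finite.bddAbove_range fun k => Vs k (t + 1) s') k
  refine ⟨pexp_pure_eq_iSup_of_forall_le (hastar t s), pexp_le_iSup _ _,
    pexp_advantage_nonneg P r _ (hVs_le_fplus (kstar t s)) ?_⟩
  rw [← hkstar, hVs _ t ht]

/-- Advantage dominance of max⁺-aggregation: for every `0 ≤ t < H` and every state `s`,
the max⁺-aggregation policy `π⊕` (playing deterministically `a*(t,s) ∈ argmax_a A^{f⁺}_t(s,a)`)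
satisfies `A^{f⁺}_t(s, π⊕) = max_{a∈A} A^{f⁺}_t(s, a) ≥ A^{f⁺}_t(s, π°) ≥ 0`,
where `π°` is the max⁺-following policy. -/
theorem maxplus_aggregation_advantage_dominance
    {S A : Type*} [Fintype S] [Nonempty S] [Fintype A] [Nonempty A]
    (P : S → A → PMF S) (r : S → A → ℝ)
    (hr : ∀ s a, 0 ≤ r s a ∧ r s a ≤ 1)
    (H : ℕ)
    (K : ℕ) (hK : 1 ≤ K)
    (πs : Fin K → ℕ → S → PMF A)
    (Vs : Fin K → ℕ → S → ℝ)
    (hVsH : ∀ k s, Vs k H s = 0)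
    (hVs : ∀ k t, t < H → ∀ s,
      Vs k t s = pexp (πs k t s) (fun a => r s a + pexp (P s a) (Vs k (t + 1))))
    (fplus : ℕ → S → ℝ)
    (hfplus : ∀ t s, fplus t s = ⨆ k : Fin K, Vs k t s)
    (kstar : ℕ → S → Fin K)
    (hkstar : ∀ t s, Vs (kstar t s) t s = fplus t s)
    (astar : ℕ → S → A)
    (hastar : ∀ t s a,
      r s a + pexp (P s a) (fplus (t + 1)) - fplus t s ≤
        r s (astar t s) + pexp (P s (astar t s)) (fplus (t + 1)) - fplus t s) :
    ∀ t, t < H → ∀ s,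
      (pexp (PMF.pure (astar t s))
          (fun a => r s a + pexp (P s a) (fplus (t + 1)) - fplus t s) =
        ⨆ a : A, (r s a + pexp (P s a) (fplus (t + 1)) - fplus t s)) ∧
      (pexp (πs (kstar t s) t s)
          (fun a => r s a + pexp (P s a) (fplus (t + 1)) - fplus t s) ≤
        ⨆ a : A, (r s a + pexp (P s a) (fplus (t + 1)) - fplus t s)) ∧
      (0 ≤ pexp (πs (kstar t s) t s)
          (fun a => r s a + pexp (P s a) (fplus (t + 1)) - fplus t s)) :=
  maxplus_aggregation_advantage_dominance_general P r H K πs Vs hVs fplus hfplus kstar hkstar astar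
    hastar
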